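/- Let (G̃, G) be a ℤ/2-pair with wall structure W = { π^{−1}(e) : e ∈ E(G) } on G̃. Then for any vertices x, y of G̃ and any (x,y)-admissible path p in G, the wall distance d_W(x, y) equals the number of edges of G that appear an odd number of times in p. In particular this number is the same for all (x,y)-admissible paths. -/

import Mathlib

/-- A multigraph: a set of vertices `V`, a set of edges `E`, and two endpoint maps.
The pair `(src e, tgt e)` records an (arbitrary) orientation of the unoriented edge `e`;
graphs are regarded as unoriented. -/
structure Multigraph (V E : Type) where
  src : E → V
  tgt : E → V

namespace Multigraph

variable {V E : Type}

/-- The edge `e` is an edge between `u` and `v` (in either direction). -/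
def EndsAt (G : Multigraph V E) (e : E) (u v : V) : Prop :=
  (G.src e = u ∧ G.tgt e = v) ∨ (G.src e = v ∧ G.tgt e = u)

/-- A path (walk) in a multigraph from `u` to `v`: a sequence
`(v₀, e₁, v₁, …, e_n, v_n)` where each `e_i` is an edge between `v_{i-1}` and `v_i`. -/
inductive Walk (G : Multigraph V E) : V → V → Type
  | nil (v : V) : Walk G v v
  | cons {u v w : V} (e : E) (h : G.EndsAt e u v) (p : Walk G v w) : Walk G u w

namespace Walk

variable {G : Multigraph V E}

/-- The length of a path. -/
def length : ∀ {u v : V}, G.Walk u v → ℕ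
  | _, _, .nil _ => 0
  | _, _, .cons _ _ p => length p + 1

/-- The list of edges of a path. -/
def edges : ∀ {u v : V}, G.Walk u v → List E
  | _, _, .nil _ => []
  | _, _, .cons e _ p => e :: edges p

/-- The list of vertices of a path (including the first one). -/
def verts : ∀ {u v : V}, G.Walk u v → List V
  | _, _, .nil v => [v]
  | u, _, .cons _ _ p => u :: verts p

/-- A path has a backtrack if for some `i` it traverses the same edge at steps
`i+1` and `i+2` returning to the same vertex, i.e. `v_i = v_{i+2}` and `e_{i+1} = e_{i+2}`. -/
def HasBacktrack {u v : V} (p : G.Walk u v) : Prop :=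
  ∃ i : ℕ, i + 1 < p.edges.length ∧ p.edges[i]? = p.edges[i + 1]? ∧
    p.verts[i]? = p.verts[i + 2]?

end Walk

/-- A multigraph is connected if any two vertices are joined by a path. -/
def Connected (G : Multigraph V E) : Prop := ∀ u v : V, Nonempty (G.Walk u v)

/-- `u` and `v` can be joined by a path avoiding all edges in `F`. -/
def ReachAvoid (G : Multigraph V E) (F : Set E) (u v : V) : Prop :=
  ∃ p : G.Walk u v, ∀ e ∈ p.edges, e ∉ F

/-- A set of edges `w` is a wall (a cut) if removing these edges from the graph separates
it into exactly two connected components (the associated half-spaces `A` and `B`). -/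
def IsWall (G : Multigraph V E) (w : Set E) : Prop :=
  ∃ A B : Set V, A.Nonempty ∧ B.Nonempty ∧ Disjoint A B ∧ A ∪ B = Set.univ ∧
    ∀ u v : V, G.ReachAvoid w u v ↔ ((u ∈ A ∧ v ∈ A) ∨ (u ∈ B ∧ v ∈ B))

/-- A wall structure: a set of walls such that every edge belongs to exactly one wall. -/
def IsWallStructure (G : Multigraph V E) (W : Set (Set E)) : Prop :=
  (∀ w ∈ W, G.IsWall w) ∧ ∀ e : E, ∃! w, w ∈ W ∧ e ∈ w

/-- The set of edges `w` separates `u` from `v` if after removing `w` there is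
no path from `u` to `v` (i.e. they lie in different half-spaces). -/
def Separates (G : Multigraph V E) (w : Set E) (u v : V) : Prop :=
  ¬ G.ReachAvoid w u v

/-- The wall pseudometric associated with a wall structure `W`:
the number of walls of `W` separating `x` from `y`. -/
noncomputable def wallDistOf (G : Multigraph V E) (W : Set (Set E)) (x y : V) : ℕ :=
  {w : Set E | w ∈ W ∧ G.Separates w x y}.ncard

/-- The graph metric: the length of a shortest path between two vertices. -/
noncomputable def graphDist (G : Multigraph V E) (u v : V) : ℕ :=
  sInf {n : ℕ | ∃ p : G.Walk u v, p.length = n}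

/-- A simple loop: a closed path of positive length with no repeated edges and no
repeated vertices (except that the first and last vertex coincide). -/
def IsSimpleLoop (G : Multigraph V E) {v : V} (p : G.Walk v v) : Prop :=
  0 < p.length ∧ p.edges.Nodup ∧ p.verts.dropLast.Nodup

/-- The girth of a multigraph: the length of a shortest simple loop. -/
noncomputable def girth (G : Multigraph V E) : ℕ :=
  sInf {n : ℕ | ∃ (v : V) (p : G.Walk v v), G.IsSimpleLoop p ∧ p.length = n}

end Multigraph

namespace Multigraph

variable {V E : Type}

/-- A graph is 2-connected if removing any single edge does not disconnect it
(equivalently, every edge lies on a simple loop). -/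
def TwoConnected (G : Multigraph V E) : Prop :=
  G.Connected ∧ ∀ (e : E) (u v : V), G.ReachAvoid {e} u v

/-- `T` is (the edge set of) a spanning tree of the finite graph `G`: the edges of `T`
connect all vertices of `G` and `|T| = |V(G)| - 1` (so the subgraph on `T` is a tree). -/
def IsSpanningTree [Fintype V] (G : Multigraph V E) (T : Finset E) : Prop :=
  (∀ u v : V, ∃ p : G.Walk u v, ∀ e ∈ p.edges, e ∈ T) ∧ T.card + 1 = Fintype.card V

variable [Fintype E] [DecidableEq E]

/-- Given a spanning tree `T` with `S = E \ T = Tᶜ`, crossing the edge `e` changes the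
second coordinate `τ ⊆ S` of a vertex of the `ℤ/2`-homology cover to `τ △ {e}` if `e ∈ S`,
and leaves it unchanged if `e ∈ T`. -/
def tauStep (T : Finset E) (e : E) (τ : {τ : Finset E // τ ⊆ Tᶜ}) :
    {τ : Finset E // τ ⊆ Tᶜ} :=
  if he : e ∈ Tᶜ then
    ⟨symmDiff τ.1 {e}, fun x hx => by
      rcases Finset.mem_symmDiff.mp hx with ⟨h1, _⟩ | ⟨h1, _⟩
      · exact τ.2 h1
      · rwa [Finset.mem_singleton.mp h1]⟩
  else τ

/-- The `ℤ/2`-homology cover of `G` associated with the spanning tree `T` (with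
`S = Tᶜ`): vertices are `V × 𝒫(S)`, edges are `E × 𝒫(S)`, where the edge `(e, τ)`
joins `(x, τ)` to `(y, τ)` if `e ∉ S`, and `(x, τ)` to `(y, τ △ {e})` if `e ∈ S`
with the orientation `x → y`. -/
def cover (G : Multigraph V E) (T : Finset E) :
    Multigraph (V × {τ : Finset E // τ ⊆ Tᶜ}) (E × {τ : Finset E // τ ⊆ Tᶜ}) where
  src p := (G.src p.1, p.2)
  tgt p := (G.tgt p.1, tauStep T p.1 p.2)

/-- The covering projection maps paths in the cover to paths in the base graph,
forgetting the second coordinates. -/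
def projWalk {G : Multigraph V E} {T : Finset E} :
    ∀ {x y : V × {τ : Finset E // τ ⊆ Tᶜ}}, (cover G T).Walk x y → G.Walk x.1 y.1
  | _, _, .nil v => .nil v.1
  | _, _, .cons e h p =>
      .cons e.1
        (by
          rcases h with ⟨h1, h2⟩ | ⟨h1, h2⟩
          · exact Or.inl ⟨congrArg Prod.fst h1, congrArg Prod.fst h2⟩
          · exact Or.inr ⟨congrArg Prod.fst h1, congrArg Prod.fst h2⟩)
        (projWalk p)

/-- A path `p` in `G` from `x₀` to `y₀` is `(x,y)`-admissible (for vertices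
`x = (x₀, τ_x)`, `y = (y₀, τ_y)` of the cover) if for every `e ∈ S = Tᶜ`, the number
of occurrences of `e` among the edges of `p` is odd when `e ∈ τ_x △ τ_y` and even
otherwise. -/
def Admissible (G : Multigraph V E) (T : Finset E)
    (x y : V × {τ : Finset E // τ ⊆ Tᶜ}) (p : G.Walk x.1 y.1) : Prop :=
  ∀ e ∈ (Tᶜ : Finset E),
    p.edges.count e % 2 = if e ∈ symmDiff x.2.1 y.2.1 then 1 else 0

/-- The wall `w_e = π⁻¹(e)` of the `ℤ/2`-homology cover associated to an edge `e` of
the base graph. -/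
def wallOf (G : Multigraph V E) (T : Finset E) (e : E) :
    Set (E × {τ : Finset E // τ ⊆ Tᶜ}) := {f | f.1 = e}

/-- The wall metric on the `ℤ/2`-homology cover: the number of walls
`w_e = π⁻¹(e)`, `e ∈ E(G)`, separating `x` from `y`. -/
noncomputable def wallDist (G : Multigraph V E) (T : Finset E)
    (x y : V × {τ : Finset E // τ ⊆ Tᶜ}) : ℕ :=
  {e : E | (cover G T).Separates (wallOf G T e) x y}.ncard

end Multigraph

/-!
Paths from `x` to `y` in the cover project exactly onto the `(x,y)`-admissible paths of `G`, so the
wall `π⁻¹(e)` separates `x` from `y` iff every admissible path uses `e`. If `e` occurs an even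
number of times in `p`, replacing each traversal of `e` by a detour around it (2-connectivity) keeps
all parities and yields an admissible path avoiding `e`. Conversely, two admissible paths have the
same parities off the spanning tree `T`, hence everywhere: the sum of their `ℤ/2` edge counts is a
cycle carried by `T`, and the boundaries of tree edges are linearly independent.
-/
theorem ZMod.natCast_add_natCast_eq_zero_iff {m n : ℕ} :
    (m + n : ZMod 2) = 0 ↔ (Odd m ↔ Odd n) := by
  rw [← Nat.cast_add, ZMod.natCast_eq_zero_iff_even, Nat.even_add, ← Nat.not_odd_iff_even,
    ← Nat.not_odd_iff_even, not_iff_not]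

theorem Nat.mod_two_eq_ite_iff {n : ℕ} {P : Prop} [Decidable P] :
    n % 2 = (if P then 1 else 0) ↔ (Odd n ↔ P) := by
  split_ifs with hP <;> simp [hP, Nat.odd_iff]

namespace Multigraph

open scoped symmDiff

variable {V E : Type} {G : Multigraph V E}

theorem EndsAt.symm {e : E} {u v : V} (h : G.EndsAt e u v) : G.EndsAt e v u :=
  h.elim Or.inr Or.inl

namespace Walk

def append : ∀ {u v w : V}, G.Walk u v → G.Walk v w → G.Walk u w
  | _, _, _, .nil _, q => q
  | _, _, _, .cons e h p, q => .cons e h (append p q)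

@[simp] theorem edges_append : ∀ {u v w : V} (p : G.Walk u v) (q : G.Walk v w),
    (p.append q).edges = p.edges ++ q.edges
  | _, _, _, .nil _, _ => rfl
  | _, _, _, .cons e _ p, q => congrArg (e :: ·) (edges_append p q)

def reverse : ∀ {u v : V}, G.Walk u v → G.Walk v u
  | _, _, .nil v => .nil v
  | _, _, .cons e h p => p.reverse.append (.cons e h.symm (.nil _))

@[simp] theorem edges_reverse : ∀ {u v : V} (p : G.Walk u v), p.reverse.edges = p.edges.reverse
  | _, _, .nil _ => rfl
  | _, _, .cons e h p => by simp [reverse, edges, edges_reverse p]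

end Walk

section Detour

variable [DecidableEq E]

/-- `r` is `p` with every traversal of `e` replaced by `D` or its reverse. -/
theorem exists_walk_not_mem_edges {e : E} (D : G.Walk (G.src e) (G.tgt e)) (hD : e ∉ D.edges) :
    ∀ {a b : V} (p : G.Walk a b), ∃ r : G.Walk a b, e ∉ r.edges ∧
      ∀ f ≠ e, r.edges.count f = p.edges.count f + p.edges.count e * D.edges.count f
  | _, _, .nil v => ⟨.nil v, List.not_mem_nil, fun f _ => by simp [Walk.edges]⟩
  | u, _, .cons (v := v) g h p => by
    obtain ⟨r, hre, hr⟩ := exists_walk_not_mem_edges D hD p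
    by_cases hg : g = e
    · subst hg
      obtain ⟨D', hD'g, hD'⟩ : ∃ D' : G.Walk u v, g ∉ D'.edges ∧
          ∀ f, D'.edges.count f = D.edges.count f := by
        rcases h with ⟨rfl, rfl⟩ | ⟨rfl, rfl⟩
        · exact ⟨D, hD, fun _ => rfl⟩
        · exact ⟨D.reverse, by simpa using hD, by simp⟩
      refine ⟨D'.append r, by simp [hD'g, hre], fun f hf => ?_⟩
      simp only [Walk.edges_append, List.count_append, hD', hr f hf, Walk.edges,
        List.count_cons_self, List.count_cons_of_ne (Ne.symm hf)]
      ring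
    · refine ⟨.cons g h r, by simp [Walk.edges, Ne.symm hg, hre], fun f hf => ?_⟩
      simp only [Walk.edges, List.count_cons, hr f hf, List.count_cons_of_ne hg]
      ring

end Detour

section Homology

variable [DecidableEq V]

def edgeBoundary (G : Multigraph V E) (f : E) : V → ZMod 2 :=
  Pi.single (G.src f) 1 + Pi.single (G.tgt f) 1

theorem edgeBoundary_of_endsAt {e : E} {u v : V} (h : G.EndsAt e u v) :
    G.edgeBoundary e = Pi.single u 1 + Pi.single v 1 := by
  rcases h with ⟨rfl, rfl⟩ | ⟨rfl, rfl⟩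
  · rfl
  · exact add_comm _ _

theorem sum_count_smul_edgeBoundary [Fintype E] [DecidableEq E] {a b : V} (p : G.Walk a b) :
    ∑ f, (p.edges.count f : ZMod 2) • G.edgeBoundary f = Pi.single a 1 + Pi.single b 1 := by
  induction p with
  | nil v =>
    simp only [Walk.edges, List.count_nil, Nat.cast_zero, zero_smul, Finset.sum_const_zero]
    exact (ZModModule.add_self _).symm
  | @cons u v w e h p ih =>
    simp only [Walk.edges, List.count_cons, beq_iff_eq, Nat.cast_add, Nat.cast_ite,
      Nat.cast_one, Nat.cast_zero, add_smul, Finset.sum_add_distrib, ite_smul, one_smul,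
      zero_smul, Finset.sum_ite_eq, Finset.mem_univ, if_true, ih, edgeBoundary_of_endsAt h]
    rw [add_comm, ZModModule.add_add_add_cancel]

/-- Together with one vertex, the boundaries of the `|V| - 1` tree edges span `(ℤ/2)^V`, since
tree paths join that vertex to every other; so they are linearly independent. -/
theorem linearIndependent_edgeBoundary [Fintype V] [Fintype E] [DecidableEq E] {T : Finset E}
    (hT : G.IsSpanningTree T) : LinearIndependent (ZMod 2) fun f : T => G.edgeBoundary f := by
  obtain ⟨u₀⟩ : Nonempty V := Fintype.card_pos_iff.mp (by rw [← hT.2]; omega)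
  let b : Option T → V → ZMod 2 := fun o => o.elim (Pi.single u₀ 1) (G.edgeBoundary ·)
  have hsingle : ∀ v, Pi.single v 1 ∈ Submodule.span (ZMod 2) (Set.range b) := by
    intro v
    obtain ⟨p, hp⟩ := hT.1 u₀ v
    have hpath : Pi.single u₀ 1 + Pi.single v 1 ∈ Submodule.span (ZMod 2) (Set.range b) := by
      rw [← sum_count_smul_edgeBoundary p]
      refine Submodule.sum_mem _ fun f _ => ?_
      by_cases hf : f ∈ T
      · exact Submodule.smul_mem _ _ (Submodule.subset_span ⟨some ⟨f, hf⟩, rfl⟩)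
      · simp [List.count_eq_zero_of_not_mem fun hm => hf (hp f hm)]
    have hu₀ : Pi.single u₀ 1 ∈ Submodule.span (ZMod 2) (Set.range b) :=
      Submodule.subset_span ⟨none, rfl⟩
    simpa [← add_assoc, ZModModule.add_self] using Submodule.add_mem _ hu₀ hpath
  have hspan : ⊤ ≤ Submodule.span (ZMod 2) (Set.range b) := by
    rw [← (Pi.basisFun (ZMod 2) V).span_eq, Submodule.span_le]
    rintro _ ⟨v, rfl⟩
    simpa using hsingle v
  have hcard : Fintype.card (Option T) = Module.finrank (ZMod 2) (V → ZMod 2) := by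
    rw [Module.finrank_fintype_fun_eq_card, Fintype.card_option, Fintype.card_coe, hT.2]
  exact (linearIndependent_of_top_le_span_of_card_eq_finrank hspan hcard).comp some
    (Option.some_injective _)

theorem eq_zero_of_sum_smul_edgeBoundary_eq_zero [Fintype V] [Fintype E] [DecidableEq E]
    {T : Finset E} (hT : G.IsSpanningTree T) {c : E → ZMod 2} (hcT : ∀ f ∉ T, c f = 0)
    (hc : ∑ f, c f • G.edgeBoundary f = 0) : c = 0 := by
  have hsum : ∑ f : T, c f • G.edgeBoundary f = 0 := by
    rw [Finset.sum_coe_sort T fun f => c f • G.edgeBoundary f, ← hc]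
    exact Finset.sum_subset (Finset.subset_univ T) fun f _ hf => by simp [hcT f hf]
  funext f
  by_cases hf : f ∈ T
  · exact Fintype.linearIndependent_iff.mp (linearIndependent_edgeBoundary hT) _ hsum ⟨f, hf⟩
  · exact hcT f hf

end Homology

section Parity

variable [Fintype E] [DecidableEq E]

def oddEdges (L : List E) : Finset E := {e | Odd (L.count e)}

theorem mem_oddEdges {L : List E} {e : E} : e ∈ oddEdges L ↔ Odd (L.count e) := by
  simp [oddEdges]

theorem oddEdges_cons (f : E) (L : List E) : oddEdges (f :: L) = {f} ∆ oddEdges L := by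
  ext e
  by_cases hfe : f = e
  · subst hfe
    simp [mem_oddEdges, Finset.mem_symmDiff, Nat.odd_add_one]
  · simp [mem_oddEdges, Finset.mem_symmDiff, List.count_cons_of_ne hfe, Ne.symm hfe]

theorem oddEdges_eq_of_inter_compl_eq [Fintype V] [DecidableEq V] {T : Finset E}
    (hT : G.IsSpanningTree T) {a b : V} {p q : G.Walk a b}
    (h : oddEdges p.edges ∩ Tᶜ = oddEdges q.edges ∩ Tᶜ) : oddEdges p.edges = oddEdges q.edges := by
  let c : E → ZMod 2 := fun f => p.edges.count f + q.edges.count f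
  have hcT : ∀ f ∉ T, c f = 0 := fun f hf =>
    ZMod.natCast_add_natCast_eq_zero_iff.mpr (by simpa [hf, mem_oddEdges] using congrArg (f ∈ ·) h)
  have hc : ∑ f, c f • G.edgeBoundary f = 0 := by
    simp only [c, add_smul, Finset.sum_add_distrib, sum_count_smul_edgeBoundary]
    exact ZModModule.add_self _
  ext f
  simpa only [mem_oddEdges] using ZMod.natCast_add_natCast_eq_zero_iff.mp
    (congrFun (eq_zero_of_sum_smul_edgeBoundary_eq_zero hT hcT hc) f)

theorem exists_walk_not_mem_edges_oddEdges_eq {e : E} (D : G.Walk (G.src e) (G.tgt e))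
    (hD : e ∉ D.edges) {a b : V} (p : G.Walk a b) (he : Even (p.edges.count e)) :
    ∃ r : G.Walk a b, e ∉ r.edges ∧ oddEdges r.edges = oddEdges p.edges := by
  obtain ⟨r, hre, hr⟩ := exists_walk_not_mem_edges D hD p
  refine ⟨r, hre, Finset.ext fun f => ?_⟩
  rw [mem_oddEdges, mem_oddEdges]
  by_cases hf : f = e
  · subst hf
    simp [List.count_eq_zero_of_not_mem hre, ← Nat.not_even_iff_odd, he]
  · simp [hr f hf, Nat.odd_add, he.mul_right]

end Parity

section Cover

variable [Fintype E] [DecidableEq E] {T : Finset E}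

theorem tauStep_tauStep (f : E) (τ : {τ : Finset E // τ ⊆ Tᶜ}) :
    tauStep T f (tauStep T f τ) = τ := by
  unfold tauStep
  split_ifs with hf
  · exact Subtype.ext (symmDiff_symmDiff_cancel_right _ _)
  · rfl

theorem coe_tauStep (f : E) (τ : {τ : Finset E // τ ⊆ Tᶜ}) :
    (tauStep T f τ).1 = τ.1 ∆ ({f} ∩ Tᶜ) := by
  unfold tauStep
  split_ifs with hf
  · rw [Finset.singleton_inter_of_mem hf]
  · rw [Finset.singleton_inter_of_notMem hf, ← Finset.bot_eq_empty, symmDiff_bot]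

theorem snd_eq_tauStep_of_endsAt {e : E × {τ : Finset E // τ ⊆ Tᶜ}}
    {u v : V × {τ : Finset E // τ ⊆ Tᶜ}} (h : (cover G T).EndsAt e u v) :
    v.2 = tauStep T e.1 u.2 := by
  rcases h with ⟨rfl, rfl⟩ | ⟨rfl, rfl⟩
  · rfl
  · exact (tauStep_tauStep _ _).symm

theorem EndsAt.exists_cover_endsAt {e : E} {u v : V} (h : G.EndsAt e u v)
    (τ : {τ : Finset E // τ ⊆ Tᶜ}) : ∃ σ, (cover G T).EndsAt (e, σ) (u, τ) (v, tauStep T e τ) := by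
  rcases h with ⟨rfl, rfl⟩ | ⟨rfl, rfl⟩
  · exact ⟨τ, Or.inl ⟨rfl, rfl⟩⟩
  · exact ⟨tauStep T e τ, Or.inr ⟨rfl, by simp [cover, tauStep_tauStep]⟩⟩

theorem exists_projWalk_eq {a b : V} (p : G.Walk a b) (τ : {τ : Finset E // τ ⊆ Tᶜ}) :
    ∃ σ, ∃ q : (cover G T).Walk (a, τ) (b, σ), projWalk q = p := by
  induction p generalizing τ with
  | nil v => exact ⟨τ, .nil _, rfl⟩
  | cons e h p ih =>
    obtain ⟨σ, q, rfl⟩ := ih (tauStep T e τ)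
    obtain ⟨σ', h'⟩ := h.exists_cover_endsAt τ
    exact ⟨σ, .cons (e, σ') h' q, rfl⟩

theorem projWalk_edges {x y : V × {τ : Finset E // τ ⊆ Tᶜ}} :
    ∀ q : (cover G T).Walk x y, (projWalk q).edges = q.edges.map Prod.fst
  | .nil _ => rfl
  | .cons e _ q => congrArg (e.1 :: ·) (projWalk_edges q)

theorem oddEdges_projWalk_inter_compl {x y : V × {τ : Finset E // τ ⊆ Tᶜ}}
    (q : (cover G T).Walk x y) : oddEdges (projWalk q).edges ∩ Tᶜ = x.2.1 ∆ y.2.1 := by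
  induction q with
  | nil v => simp [projWalk, Walk.edges, oddEdges]
  | @cons u v w e h q ih =>
    have huv : {e.1} ∩ Tᶜ = u.2.1 ∆ v.2.1 := by
      rw [snd_eq_tauStep_of_endsAt h, coe_tauStep, symmDiff_symmDiff_cancel_left]
    change oddEdges (e.1 :: (projWalk q).edges) ∩ Tᶜ = _
    rw [oddEdges_cons, ← Finset.inf_eq_inter, inf_symmDiff_distrib_right, Finset.inf_eq_inter,
      Finset.inf_eq_inter, ih, huv, symmDiff_assoc, symmDiff_symmDiff_cancel_left]

end Cover

section Admissible

variable [Fintype E] [DecidableEq E] {T : Finset E} {x y : V × {τ : Finset E // τ ⊆ Tᶜ}}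

theorem admissible_iff {p : G.Walk x.1 y.1} :
    Admissible G T x y p ↔ oddEdges p.edges ∩ Tᶜ = x.2.1 ∆ y.2.1 := by
  have hxy : x.2.1 ∆ y.2.1 ⊆ Tᶜ := symmDiff_le_sup.trans (sup_le x.2.2 y.2.2)
  simp only [Admissible, Nat.mod_two_eq_ite_iff, Finset.ext_iff, Finset.mem_inter, mem_oddEdges]
  refine ⟨fun h e => ?_, fun h e he => by simpa [he] using h e⟩
  by_cases he : e ∈ Tᶜ
  · simp [he, h e he]
  · simpa [he] using fun h' => he (hxy h')

theorem admissible_projWalk (q : (cover G T).Walk x y) : Admissible G T x y (projWalk q) :=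
  admissible_iff.mpr (oddEdges_projWalk_inter_compl q)

theorem Admissible.exists_projWalk_eq {p : G.Walk x.1 y.1} (hp : Admissible G T x y p) :
    ∃ q : (cover G T).Walk x y, projWalk q = p := by
  obtain ⟨x₀, τx⟩ := x
  obtain ⟨y₀, τy⟩ := y
  obtain ⟨σ, q, rfl⟩ := exists_projWalk_eq p τx
  obtain rfl : σ = τy := Subtype.ext <| symmDiff_right_injective τx.1 <|
    (oddEdges_projWalk_inter_compl q).symm.trans (admissible_iff.mp hp)
  exact ⟨q, rfl⟩

theorem Admissible.of_oddEdges_eq {p r : G.Walk x.1 y.1} (hp : Admissible G T x y p)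
    (h : oddEdges r.edges = oddEdges p.edges) : Admissible G T x y r :=
  admissible_iff.mpr (h ▸ admissible_iff.mp hp)

theorem Admissible.oddEdges_eq [Fintype V] [DecidableEq V] (hT : G.IsSpanningTree T)
    {p r : G.Walk x.1 y.1} (hp : Admissible G T x y p) (hr : Admissible G T x y r) :
    oddEdges p.edges = oddEdges r.edges :=
  oddEdges_eq_of_inter_compl_eq hT ((admissible_iff.mp hp).trans (admissible_iff.mp hr).symm)

theorem reachAvoid_wallOf_iff {e : E} : (cover G T).ReachAvoid (wallOf G T e) x y ↔
    ∃ p : G.Walk x.1 y.1, Admissible G T x y p ∧ e ∉ p.edges := by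
  constructor
  · rintro ⟨q, hq⟩
    refine ⟨projWalk q, admissible_projWalk q, ?_⟩
    rw [projWalk_edges, List.mem_map]
    rintro ⟨f, hf, rfl⟩
    exact hq f hf rfl
  · rintro ⟨p, hp, he⟩
    obtain ⟨q, rfl⟩ := hp.exists_projWalk_eq
    refine ⟨q, fun f hf hfe => he ?_⟩
    rw [projWalk_edges]
    exact hfe ▸ List.mem_map_of_mem hf

end Admissible

end Multigraph

open Multigraph in
/-- For a `ℤ/2`-pair `(G̃, G)` and vertices `x`, `y` of `G̃`, the wall distance
`d_W(x,y)` equals the number of edges of `G` appearing an odd number of times in any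
`(x,y)`-admissible path in `G` (in particular, this number does not depend on the
chosen admissible path). -/
theorem wallDist_eq_odd_edges {V E : Type} [Fintype V] [Fintype E]
    [DecidableEq V] [DecidableEq E] (G : Multigraph V E)
    (hG : G.TwoConnected) (T : Finset E) (hT : G.IsSpanningTree T)
    (x y : V × {τ : Finset E // τ ⊆ Tᶜ}) (p : G.Walk x.1 y.1)
    (hadm : Admissible G T x y p) :
    wallDist G T x y = {e : E | p.edges.count e % 2 = 1}.ncard := by
  unfold wallDist
  congr 1
  ext e
  rw [Set.mem_ofPred_eq, Set.mem_ofPred_eq, Separates, reachAvoid_wallOf_iff, ← Nat.odd_iff]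
  constructor
  · intro hsep
    by_contra heven
    obtain ⟨D, hD⟩ := hG.2 e (G.src e) (G.tgt e)
    obtain ⟨r, hre, hr⟩ := exists_walk_not_mem_edges_oddEdges_eq D (fun h => hD e h rfl) p
      (Nat.not_odd_iff_even.mp heven)
    exact hsep ⟨r, hadm.of_oddEdges_eq hr, hre⟩
  · rintro hodd ⟨r, hr, hre⟩
    rw [← mem_oddEdges, hadm.oddEdges_eq hT hr, mem_oddEdges] at hodd
    exact hre (List.count_pos_iff.mp hodd.pos)
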